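/- Let w > 0 and consider the partition of ℝ³ into A, B, C, D defined in cylindrical coordinates [m,r,θ] around the diagonal with a fixed angle Θ ∈ [π/3, π]: A = {π/3 ≤ θ < Θ, d(·, P) ≥ w}, D = {Θ ≤ θ < π, d(·, P) ≥ w}, B = {π/3 ≤ θ < Θ, d(·,P) < w} ∪ {θ ∈ [0,π/3) ∪ [5π/3, 2π)}, C = ({Θ ≤ θ < π, d(·,P) < w} ∪ {θ ∈ [π, 5π/3)}) \ D', where P = {θ = Θ}. Then the Euclidean distance between A and D is at least w, the distance between A and C is at least w, and the distance between B and D is at least w. -/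

import Mathlib

/-!
A pair of points whose angles lie on the two sides of `Θ`, less than `π` apart, spans a segment
that meets the half-plane `P`; hence the distance between them dominates the distance from
either of them to `P`. If instead they are between `π` and `3π/2` apart, the angle between their
radial parts is obtuse, so their distance dominates either radius, and the radius in turn
dominates the distance to `P`, which contains the diagonal. After shifting `B`'s angles in
`[5π/3, 2π)` by `-2π`, every pair `(A,D)`, `(A,C)`, `(B,D)` falls under one of these two cases.
-/

open Real Set Metric

noncomputable def cylPoint (m r θ : ℝ) : EuclideanSpace ℝ (Fin 3) :=
  WithLp.toLp 2 ![m + √(2 / 3) * r * cos (θ + 2 * π / 3),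
    m + √(2 / 3) * r * cos θ,
    m + √(2 / 3) * r * cos (θ - 2 * π / 3)]

theorem cylPoint_eq_add (m r θ : ℝ) :
    cylPoint m r θ = m • cylPoint 1 0 0 + (r * cos θ) • cylPoint 0 1 0
      + (r * sin θ) • cylPoint 0 1 (π / 2) := by
  ext i
  fin_cases i <;>
    simp only [cylPoint, Fin.zero_eta, Fin.mk_one, Fin.reduceFinMk, Matrix.cons_val_zero,
      Matrix.cons_val_one, Matrix.cons_val_two, Matrix.head_cons, Matrix.tail_cons,
      PiLp.add_apply, PiLp.smul_apply, PiLp.toLp_apply, smul_eq_mul, cos_add, cos_sub, cos_zero,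
      sin_zero, cos_pi_div_two, sin_pi_div_two] <;> ring

theorem cylPoint_sub_two_pi (m r θ : ℝ) : cylPoint m r (θ - 2 * π) = cylPoint m r θ := by
  rw [cylPoint_eq_add m r, cylPoint_eq_add m r θ, cos_sub_two_pi, sin_sub_two_pi]

theorem dist_cylPoint_sq (m r θ m' r' θ' : ℝ) :
    dist (cylPoint m r θ) (cylPoint m' r' θ') ^ 2
      = 3 * (m - m') ^ 2 + r ^ 2 + r' ^ 2 - 2 * r * r' * cos (θ - θ') := by
  have hcos : cos (2 * π / 3) = -(1 / 2) := by
    rw [show 2 * π / 3 = π - π / 3 by ring, cos_pi_sub, cos_pi_div_three]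
  have hsin : sin (2 * π / 3) = √3 / 2 := by
    rw [show 2 * π / 3 = π - π / 3 by ring, sin_pi_sub, sin_pi_div_three]
  rw [EuclideanSpace.dist_eq, sq_sqrt (by positivity)]
  simp only [cylPoint, Fin.sum_univ_three, Matrix.cons_val_zero, Matrix.cons_val_one,
    Matrix.cons_val_two, Matrix.tail_cons, Matrix.head_cons, Real.dist_eq, sq_abs,
    PiLp.toLp_apply, cos_add, cos_sub, hcos, hsin]
  have h₂ : √(2 / 3) ^ 2 = 2 / 3 := sq_sqrt (by norm_num)
  have h₃ : √3 ^ 2 = 3 := sq_sqrt (by norm_num)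
  linear_combination
    ((3 / 2) * (r * cos θ - r' * cos θ') ^ 2 + (√3 ^ 2 / 2) * (r * sin θ - r' * sin θ') ^ 2) * h₂
      + (1 / 3) * (r * sin θ - r' * sin θ') ^ 2 * h₃
      + r ^ 2 * sin_sq_add_cos_sq θ + r' ^ 2 * sin_sq_add_cos_sq θ'

theorem dist_cylPoint_of_radius_zero (m r θ θ' : ℝ) (hr : 0 ≤ r) :
    dist (cylPoint m r θ) (cylPoint m 0 θ') = r := by
  have h := dist_cylPoint_sq m r θ m 0 θ'
  rw [sub_self] at h
  nlinarith [dist_nonneg (x := cylPoint m r θ) (y := cylPoint m 0 θ')]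

theorem radius_le_dist_cylPoint_of_cos_nonpos {m r θ m' r' θ' : ℝ} (hr : 0 ≤ r) (hr' : 0 ≤ r')
    (hcos : cos (θ - θ') ≤ 0) : r ≤ dist (cylPoint m r θ) (cylPoint m' r' θ') := by
  have h := dist_cylPoint_sq m r θ m' r' θ'
  nlinarith [mul_nonneg (mul_nonneg hr hr') (neg_nonneg.2 hcos), sq_nonneg (m - m'),
    dist_nonneg (x := cylPoint m r θ) (y := cylPoint m' r' θ')]

theorem infDist_cylPoint_le_radius {P : Set (EuclideanSpace ℝ (Fin 3))} {m r θ θ' : ℝ}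
    (hP : cylPoint m 0 θ' ∈ P) (hr : 0 ≤ r) : infDist (cylPoint m r θ) P ≤ r :=
  (infDist_le_dist_of_mem hP).trans_eq (dist_cylPoint_of_radius_zero m r θ θ' hr)

theorem infDist_le_dist_of_mem_segment {E : Type*} [NormedAddCommGroup E] [NormedSpace ℝ E]
    {x y z : E} {s : Set E} (hz : z ∈ segment ℝ x y) (hs : z ∈ s) : infDist x s ≤ dist x y :=
  (infDist_le_dist_of_mem hs).trans <| by
    linarith [dist_add_dist_of_mem_segment hz, dist_nonneg (x := z) (y := y)]

theorem exists_convexComb_eq_polar {r r' θ θ' Θ : ℝ} (hr : 0 ≤ r) (hr' : 0 ≤ r')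
    (hθ : θ < Θ) (hθ' : Θ ≤ θ') (hlt : θ' - θ < π) :
    ∃ t ∈ Icc (0 : ℝ) 1, ∃ ρ, 0 ≤ ρ ∧
      (1 - t) * (r * cos θ) + t * (r' * cos θ') = ρ * cos Θ ∧
      (1 - t) * (r * sin θ) + t * (r' * sin θ') = ρ * sin Θ := by
  rcases hr.eq_or_lt with rfl | hr
  · exact ⟨0, ⟨le_rfl, zero_le_one⟩, 0, le_rfl, by ring, by ring⟩
  -- `a` and `b` are the signed distances of the two endpoints from the line at angle `Θ`,
  -- so the chord crosses that line at parameter `a / (a - b)`.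
  set a := r * sin (Θ - θ)
  set b := r' * sin (Θ - θ')
  have ha : 0 < a := mul_pos hr (sin_pos_of_pos_of_lt_pi (by linarith) (by linarith))
  have hb : b ≤ 0 :=
    mul_nonpos_of_nonneg_of_nonpos hr'
      (sin_nonpos_of_nonpos_of_neg_pi_le (by linarith) (by linarith))
  have hab : 0 < a - b := by linarith
  have hρ : 0 ≤ r * r' * sin (θ' - θ) :=
    mul_nonneg (mul_nonneg hr.le hr') (sin_nonneg_of_nonneg_of_le_pi (by linarith) hlt.le)
  refine ⟨a / (a - b), ⟨div_nonneg ha.le hab.le, (div_le_one hab).2 (by linarith)⟩,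
    r * r' * sin (θ' - θ) / (a - b), div_nonneg hρ hab.le, ?_, ?_⟩ <;>
  · field_simp
    simp only [a, b, sin_sub]
    ring

theorem exists_cylPoint_mem_segment {m r θ m' r' θ' Θ : ℝ} (hr : 0 ≤ r) (hr' : 0 ≤ r')
    (hθ : θ < Θ) (hθ' : Θ ≤ θ') (hlt : θ' - θ < π) :
    ∃ μ ρ, 0 ≤ ρ ∧ cylPoint μ ρ Θ ∈ segment ℝ (cylPoint m r θ) (cylPoint m' r' θ') := by
  obtain ⟨t, ⟨ht₀, ht₁⟩, ρ, hρ, hcos, hsin⟩ := exists_convexComb_eq_polar hr hr' hθ hθ' hlt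
  refine ⟨(1 - t) * m + t * m', ρ, hρ, 1 - t, t, by linarith, ht₀, by ring, ?_⟩
  rw [cylPoint_eq_add m r θ, cylPoint_eq_add m' r' θ', cylPoint_eq_add _ ρ Θ, ← hcos, ← hsin]
  module

theorem le_dist_cylPoint {w Θ : ℝ} {P : Set (EuclideanSpace ℝ (Fin 3))}
    (hP : ∀ μ ρ, 0 ≤ ρ → cylPoint μ ρ Θ ∈ P) {m r θ m' r' θ' : ℝ} (hr : 0 ≤ r) (hr' : 0 ≤ r')
    (hθ : θ < Θ) (hθ' : Θ ≤ θ') (hlt : θ' - θ ≤ 3 * π / 2)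
    (hw : w ≤ infDist (cylPoint m r θ) P ∨ w ≤ infDist (cylPoint m' r' θ') P) :
    w ≤ dist (cylPoint m r θ) (cylPoint m' r' θ') := by
  rcases lt_or_ge (θ' - θ) π with hπ | hπ
  · obtain ⟨μ, ρ, hρ, hz⟩ := exists_cylPoint_mem_segment hr hr' hθ hθ' hπ
    rcases hw with hw | hw
    · exact hw.trans (infDist_le_dist_of_mem_segment hz (hP μ ρ hρ))
    · rw [segment_symm] at hz
      exact hw.trans ((infDist_le_dist_of_mem_segment hz (hP μ ρ hρ)).trans_eq (dist_comm _ _))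
  · have hcos : cos (θ' - θ) ≤ 0 :=
      cos_nonpos_of_pi_div_two_le_of_le (by linarith [pi_pos]) (by linarith)
    rcases hw with hw | hw
    · rw [← neg_sub, cos_neg] at hcos
      exact hw.trans ((infDist_cylPoint_le_radius (hP m 0 le_rfl) hr).trans
        (radius_le_dist_cylPoint_of_cos_nonpos hr hr' hcos))
    · rw [dist_comm]
      exact hw.trans ((infDist_cylPoint_le_radius (hP m' 0 le_rfl) hr').trans
        (radius_le_dist_cylPoint_of_cos_nonpos hr' hr hcos))

theorem stmt_17_general (w : ℝ) (Θ : ℝ) (hΘ : Θ ∈ Set.Icc (π / 3) π)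
    (coord : ℝ → ℝ → ℝ → EuclideanSpace ℝ (Fin 3))
    (hcoord : ∀ m r θ, coord m r θ =
      ![m + Real.sqrt (2 / 3) * r * Real.cos (θ + 2 * π / 3),
        m + Real.sqrt (2 / 3) * r * Real.cos θ,
        m + Real.sqrt (2 / 3) * r * Real.cos (θ - 2 * π / 3)])
    (Diag : Set (EuclideanSpace ℝ (Fin 3)))
    (P : Set (EuclideanSpace ℝ (Fin 3)))
    (hP : P = {q | ∃ m r : ℝ, 0 ≤ r ∧ q = coord m r Θ})
    (A B C D : Set (EuclideanSpace ℝ (Fin 3)))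
    (hA : A = {q | ∃ m r θ : ℝ, 0 ≤ r ∧ q = coord m r θ ∧
      π / 3 ≤ θ ∧ θ < Θ ∧ w ≤ Metric.infDist q P})
    (hB : B = {q | ∃ m r θ : ℝ, 0 ≤ r ∧ q = coord m r θ ∧
      ((π / 3 ≤ θ ∧ θ < Θ ∧ Metric.infDist q P < w) ∨
        (0 ≤ θ ∧ θ < π / 3) ∨ (5 * π / 3 ≤ θ ∧ θ < 2 * π))})
    (hC : C = {q | (∃ m r θ : ℝ, 0 ≤ r ∧ q = coord m r θ ∧
      ((Θ ≤ θ ∧ θ < π ∧ Metric.infDist q P < w) ∨ (π ≤ θ ∧ θ < 5 * π / 3))) ∧ q ∉ Diag})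
    (hD : D = {q | ∃ m r θ : ℝ, 0 ≤ r ∧ q = coord m r θ ∧
      Θ ≤ θ ∧ θ < π ∧ w ≤ Metric.infDist q P}) :
    (∀ x ∈ A, ∀ y ∈ D, w ≤ dist x y) ∧
      (∀ x ∈ A, ∀ y ∈ C, w ≤ dist x y) ∧
      ∀ x ∈ B, ∀ y ∈ D, w ≤ dist x y := by
  obtain ⟨hΘ₁, hΘ₂⟩ := hΘ
  have hπ := pi_pos
  obtain rfl : coord = cylPoint :=
    funext₃ fun m r θ => congrArg (WithLp.toLp 2) (hcoord m r θ)
  have hPmem : ∀ μ ρ, 0 ≤ ρ → cylPoint μ ρ Θ ∈ P := fun μ ρ hρ => hP ▸ ⟨μ, ρ, hρ, rfl⟩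
  subst hA hB hC hD
  refine ⟨?_, ?_, ?_⟩
  · rintro _ ⟨m, r, θ, hr, rfl, hθ₀, hθ, hw⟩ _ ⟨m', r', θ', hr', rfl, hθ', hθ'', -⟩
    exact le_dist_cylPoint hPmem hr hr' hθ hθ' (by linarith) (.inl hw)
  · rintro _ ⟨m, r, θ, hr, rfl, hθ₀, hθ, hw⟩ _
      ⟨⟨m', r', θ', hr', rfl, ⟨hθ', hθ'', -⟩ | ⟨hθ', hθ''⟩⟩, -⟩
    · exact le_dist_cylPoint hPmem hr hr' hθ hθ' (by linarith) (.inl hw)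
    · exact le_dist_cylPoint hPmem hr hr' hθ (by linarith) (by linarith) (.inl hw)
  · rintro _ ⟨m, r, θ, hr, rfl, ⟨hθ₀, hθ, -⟩ | ⟨hθ₀, hθ⟩ | ⟨hθ₀, hθ⟩⟩ _
      ⟨m', r', θ', hr', rfl, hθ', hθ'', hw⟩
    · exact le_dist_cylPoint hPmem hr hr' hθ hθ' (by linarith) (.inr hw)
    · exact le_dist_cylPoint hPmem hr hr' (by linarith) hθ' (by linarith) (.inr hw)
    · rw [← cylPoint_sub_two_pi]
      exact le_dist_cylPoint hPmem hr hr' (by linarith) hθ' (by linarith) (.inr hw)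

/-- Lemma 1: in the partition `A, B, C, D` of ℝ³ built from the half-plane `P` at angle
`Θ ∈ [π/3, π]` around the diagonal, with padding `w > 0`, the non-neighbouring pairs
`(A,D)`, `(A,C)`, `(B,D)` are at Euclidean distance at least `w` from each other. -/
theorem stmt_17 (w : ℝ) (hw : 0 < w) (Θ : ℝ) (hΘ : Θ ∈ Set.Icc (π / 3) π)
    (coord : ℝ → ℝ → ℝ → EuclideanSpace ℝ (Fin 3))
    (hcoord : ∀ m r θ, coord m r θ =
      ![m + Real.sqrt (2 / 3) * r * Real.cos (θ + 2 * π / 3),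
        m + Real.sqrt (2 / 3) * r * Real.cos θ,
        m + Real.sqrt (2 / 3) * r * Real.cos (θ - 2 * π / 3)])
    (Diag : Set (EuclideanSpace ℝ (Fin 3)))
    (hDiag : Diag = {q | ∃ t : ℝ, ∀ i, q i = t})
    (P : Set (EuclideanSpace ℝ (Fin 3)))
    (hP : P = {q | ∃ m r : ℝ, 0 ≤ r ∧ q = coord m r Θ})
    (A B C D : Set (EuclideanSpace ℝ (Fin 3)))
    (hA : A = {q | ∃ m r θ : ℝ, 0 ≤ r ∧ q = coord m r θ ∧
      π / 3 ≤ θ ∧ θ < Θ ∧ w ≤ Metric.infDist q P})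
    (hB : B = {q | ∃ m r θ : ℝ, 0 ≤ r ∧ q = coord m r θ ∧
      ((π / 3 ≤ θ ∧ θ < Θ ∧ Metric.infDist q P < w) ∨
        (0 ≤ θ ∧ θ < π / 3) ∨ (5 * π / 3 ≤ θ ∧ θ < 2 * π))})
    (hC : C = {q | (∃ m r θ : ℝ, 0 ≤ r ∧ q = coord m r θ ∧
      ((Θ ≤ θ ∧ θ < π ∧ Metric.infDist q P < w) ∨ (π ≤ θ ∧ θ < 5 * π / 3))) ∧ q ∉ Diag})
    (hD : D = {q | ∃ m r θ : ℝ, 0 ≤ r ∧ q = coord m r θ ∧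
      Θ ≤ θ ∧ θ < π ∧ w ≤ Metric.infDist q P}) :
    (∀ x ∈ A, ∀ y ∈ D, w ≤ dist x y) ∧
      (∀ x ∈ A, ∀ y ∈ C, w ≤ dist x y) ∧
      ∀ x ∈ B, ∀ y ∈ D, w ≤ dist x y :=
  stmt_17_general w Θ hΘ coord hcoord Diag P hP A B C D hA hB hC hD
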